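/- arXiv:1607.08342 — 2 statements merged into one kernel-verified Lean document; each statement's English description precedes it below -/
import Mathlib

section
/- Let [b,e] be a (p-1)-segment of X^{p-1} and let Q^p[i] denote the p-th symbol of the suffix X^{p-1}[i] (the sentinel if the suffix is shorter than p). Then X^p[b..e] is obtained from X^{p-1}[b..e] by stably sorting the positions b,...,e by the key Q^p: the suffix X^{p-1}[i] appears in X^p at position b + r − 1, where r = (number of positions j in [b,e] with Q^p[j] < Q^p[i]) + (number of positions j in [b,i] with Q^p[j] = Q^p[i]). -/
/-! Inside a `(p-1)`-segment all suffixes share their `(p-1)`-prefix, so `≺_p` compares two of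
them by their `p`-th symbols and, on a tie, by `≺_{p-1}`, i.e. by their positions in `X^{p-1}`;
relative to a suffix outside the segment, `≺_p` agrees with `≺_{p-1}`. In a sorted array the
position of a suffix is the number of suffixes below it, and counting those below `X^{p-1}[i]`
gives the `b` suffixes before the segment plus the rank of `i` in the stable sort. -/

open scoped Classical

/-- Symbol type for suffixes: ranked sentinels (ordered by (suffix length, string index))
below all regular alphabet symbols. -/
abbrev SSym (A : Type*) := (ℕ ×ₗ ℕ) ⊕ₗ A

variable {A : Type*} [LinearOrder A] {m k : ℕ}

/-- `symAt s (q, l) t` is the `t`-th symbol (0-indexed) of the `l`-suffix of the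
string `s q` (a string of length `k`), padded beyond its end with its own ranked sentinel. -/
def symAt (s : Fin m → Fin k → A) (o : Fin m × Fin (k+1)) (t : ℕ) : SSym A :=
  if _h : t < (o.2 : ℕ) then
    toLex (Sum.inr (s o.1 ⟨k - (o.2 : ℕ) + t, by have := o.2.isLt; omega⟩))
  else
    toLex (Sum.inl (toLex ((o.2 : ℕ), (o.1 : ℕ))))

/-- The `p`-prefix of the suffix occurrence `o`. -/
def pprefix (s : Fin m → Fin k → A) (p : ℕ) (o : Fin m × Fin (k+1)) : List (SSym A) :=
  List.ofFn fun t : Fin p => symAt s o t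

/-- The full suffix string of occurrence `o` (its `l` symbols followed by its sentinel). -/
def suffStr (s : Fin m → Fin k → A) (o : Fin m × Fin (k+1)) : List (SSym A) :=
  List.ofFn fun t : Fin ((o.2 : ℕ) + 1) => symAt s o t

/-- The order `≺_p`: compare `p`-prefixes lexicographically, then suffix lengths,
then string indices. -/
def precP (s : Fin m → Fin k → A) (p : ℕ) (α β : Fin m × Fin (k+1)) : Prop :=
  List.Lex (· < ·) (pprefix s p α) (pprefix s p β) ∨
    (pprefix s p α = pprefix s p β ∧
      ((α.2 : ℕ) < (β.2 : ℕ) ∨ ((α.2 : ℕ) = (β.2 : ℕ) ∧ (α.1 : ℕ) < (β.1 : ℕ))))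

/-- Full lexicographic order on suffix occurrences, ties broken by length then string index. -/
def fullOrd (s : Fin m → Fin k → A) (α β : Fin m × Fin (k+1)) : Prop :=
  List.Lex (· < ·) (suffStr s α) (suffStr s β) ∨
    (suffStr s α = suffStr s β ∧
      ((α.2 : ℕ) < (β.2 : ℕ) ∨ ((α.2 : ℕ) = (β.2 : ℕ) ∧ (α.1 : ℕ) < (β.1 : ℕ))))

/-- `[b,e]` is the `p`-segment of position `i` in the sorted array `X`:
a position `j` carries the same `p`-prefix as position `i` iff `b ≤ j ≤ e`. -/
def isSeg (s : Fin m → Fin k → A) (p : ℕ) {n : ℕ}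
    (X : Fin n → Fin m × Fin (k+1)) (b e i : Fin n) : Prop :=
  b ≤ i ∧ i ≤ e ∧ ∀ j, (pprefix s p (X j) = pprefix s p (X i) ↔ b ≤ j ∧ j ≤ e)

/-- Position `i` is the start of its `p`-segment in the sorted array `X`. -/
def isStart (s : Fin m → Fin k → A) (p : ℕ) {n : ℕ}
    (X : Fin n → Fin m × Fin (k+1)) (i : Fin n) : Prop :=
  ∀ j, j < i → pprefix s p (X j) ≠ pprefix s p (X i)

open Finset

theorem List.lex_append_singleton_iff {α : Type*} {r : α → α → Prop} {x y : α} :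
    ∀ {l₁ l₂ : List α}, l₁.length = l₂.length →
      (Lex r (l₁ ++ [x]) (l₂ ++ [y]) ↔ Lex r l₁ l₂ ∨ l₁ = l₂ ∧ r x y)
  | [], [], _ => by simp [lex_singleton_iff]
  | a :: l₁, b :: l₂, h => by
    simp only [cons_append, cons_lex_cons_iff, cons.injEq,
      lex_append_singleton_iff (Nat.succ_injective h)]
    tauto

section SortedArray

variable {α : Type*} {r : α → α → Prop} [Std.Asymm r] {n : ℕ} {X : Fin n → α}

theorem rel_iff_lt_of_sorted (hX : ∀ i j, i < j → r (X i) (X j)) (i j : Fin n) :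
    r (X i) (X j) ↔ i < j := by
  refine ⟨fun h => ?_, hX i j⟩
  rcases lt_trichotomy i j with hij | rfl | hij
  · exact hij
  · exact absurd h (Std.Irrefl.irrefl _)
  · exact absurd h (Std.Asymm.asymm _ _ (hX j i hij))

theorem card_filter_rel_of_sorted [Fintype α] (hbij : Function.Bijective X)
    (hX : ∀ i j, i < j → r (X i) (X j)) (i : Fin n) :
    (univ.filter fun a => r a (X i)).card = i := by
  rw [← Fin.card_Iio]
  exact (card_equiv (Equiv.ofBijective X hbij) fun j => by simp [rel_iff_lt_of_sorted hX]).symm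

end SortedArray

/-- `j` precedes `i ∈ [b, e]` once the block `[b, e]` is stably sorted by the key `Q`. -/
def StableSortLT {n : ℕ} {β : Type*} [LinearOrder β] (Q : Fin n → β) (b e j i : Fin n) :
    Prop :=
  j < b ∨ (j ∈ Icc b e ∧ (Q j < Q i ∨ Q j = Q i ∧ j < i))

theorem card_stableSortLT_add_one {n : ℕ} {β : Type*} [LinearOrder β] [DecidableEq β]
    (Q : Fin n → β) {b e i : Fin n} (hbi : b ≤ i) (hie : i ≤ e) :
    (univ.filter fun j => StableSortLT Q b e j i).card + 1 =
      b + (((Icc b e).filter fun j => Q j < Q i).card +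
        ((Icc b i).filter fun j => Q j = Q i).card) := by
  have hsplit : insert i (univ.filter fun j => StableSortLT Q b e j i) =
      (Iio b ∪ (Icc b e).filter fun j => Q j < Q i) ∪ (Icc b i).filter fun j => Q j = Q i := by
    ext j
    simp only [StableSortLT, mem_insert, mem_filter, mem_univ, true_and, mem_union, mem_Iio,
      mem_Icc]
    grind
  rw [← card_insert_of_notMem (a := i) (by simp [StableSortLT, hbi]), hsplit,
    card_union_of_disjoint, card_union_of_disjoint, Fin.card_Iio, add_assoc]
  · exact disjoint_left.2 fun j => by simp only [mem_Iio, mem_filter, mem_Icc]; grind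
  · exact disjoint_left.2 fun j => by simp only [mem_union, mem_Iio, mem_filter, mem_Icc]; grind

omit [LinearOrder A] in
theorem pprefix_succ (s : Fin m → Fin k → A) (q : ℕ) (o : Fin m × Fin (k+1)) :
    pprefix s (q + 1) o = pprefix s q o ++ [symAt s o q] := by
  rw [pprefix, List.ofFn_succ']
  simp [pprefix, List.concat_eq_append]

omit [LinearOrder A] in
theorem length_pprefix (s : Fin m → Fin k → A) (q : ℕ) (o : Fin m × Fin (k+1)) :
    (pprefix s q o).length = q := by simp [pprefix]

instance (s : Fin m → Fin k → A) (p : ℕ) : Std.Asymm (precP s p) where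
  asymm _ _ := by
    rintro (h | ⟨he, ht⟩) (h' | ⟨he', ht'⟩)
    · exact Std.Asymm.asymm _ _ h h'
    · exact List.lex_irrefl (fun _ => lt_irrefl _) _ (he' ▸ h)
    · exact List.lex_irrefl (fun _ => lt_irrefl _) _ (he ▸ h')
    · omega

section Refinement

variable (s : Fin m → Fin k → A) {q : ℕ} {o o' : Fin m × Fin (k+1)}

theorem precP_succ_iff :
    precP s (q + 1) o o' ↔ List.Lex (· < ·) (pprefix s q o) (pprefix s q o') ∨
      pprefix s q o = pprefix s q o' ∧ (symAt s o q < symAt s o' q ∨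
        symAt s o q = symAt s o' q ∧
          ((o.2 : ℕ) < o'.2 ∨ (o.2 : ℕ) = o'.2 ∧ (o.1 : ℕ) < o'.1)) := by
  rw [precP, pprefix_succ, pprefix_succ, List.append_singleton_inj,
    List.lex_append_singleton_iff (by rw [length_pprefix, length_pprefix])]
  tauto

theorem precP_succ_iff_of_pprefix_ne (h : pprefix s q o ≠ pprefix s q o') :
    precP s (q + 1) o o' ↔ precP s q o o' := by
  rw [precP_succ_iff, precP]
  simp only [h, false_and, or_false]

theorem precP_succ_iff_of_pprefix_eq (h : pprefix s q o = pprefix s q o') :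
    precP s (q + 1) o o' ↔ symAt s o q < symAt s o' q ∨
      symAt s o q = symAt s o' q ∧ precP s q o o' := by
  rw [precP_succ_iff, precP]
  simp only [h, true_and, List.lex_irrefl (fun _ => lt_irrefl _), false_or]

end Refinement

omit [LinearOrder A] in
theorem isSeg.of_le_of_le (s : Fin m → Fin k → A) {q n : ℕ} {X : Fin n → Fin m × Fin (k+1)}
    {b e i : Fin n} (hseg : isSeg s q X b e b) (hbi : b ≤ i) (hie : i ≤ e) :
    isSeg s q X b e i := by
  refine ⟨hbi, hie, fun j => ?_⟩
  rw [(hseg.2.2 i).2 ⟨hbi, hie⟩]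
  exact hseg.2.2 j

theorem precP_succ_iff_stableSortLT (s : Fin m → Fin k → A) {q n : ℕ}
    {X : Fin n → Fin m × Fin (k+1)} (hsort : ∀ i j, i < j → precP s q (X i) (X j))
    {b e i : Fin n} (hseg : isSeg s q X b e i) (j : Fin n) :
    precP s (q + 1) (X j) (X i) ↔ StableSortLT (fun j => symAt s (X j) q) b e j i := by
  obtain ⟨hbi, hie, hmem⟩ := hseg
  by_cases hj : b ≤ j ∧ j ≤ e
  · rw [precP_succ_iff_of_pprefix_eq s ((hmem j).2 hj), rel_iff_lt_of_sorted hsort]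
    simp only [StableSortLT, mem_Icc, hj, not_lt.2 hj.1]
    tauto
  · rw [precP_succ_iff_of_pprefix_ne s (mt (hmem j).1 hj), rel_iff_lt_of_sorted hsort]
    simp only [StableSortLT, mem_Icc, hj, false_and, or_false]
    grind

/-- Let `[b,e]` be a `(p-1)`-segment of `X^{p-1}` and let `Q j` be the
`p`-th symbol (0-indexed position `p-1`) of the suffix `X^{p-1} j` (a sentinel if the
suffix is shorter than `p`).  Then `X^p[b..e]` is obtained from `X^{p-1}[b..e]` by stably
sorting the positions `b, …, e` by the key `Q`: the suffix `X^{p-1} i` appears in `X^p`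
at position `b + r - 1`, where `r` is the number of positions `j ∈ [b,e]` with
`Q j < Q i` plus the number of positions `j ∈ [b,i]` with `Q j = Q i`. -/
theorem segment_stable_sort (s : Fin m → Fin k → A) (p : ℕ) (hp : 1 ≤ p)
    (Xprev Xcur : Fin ((k + 1) * m) → Fin m × Fin (k + 1))
    (hbij1 : Function.Bijective Xprev)
    (hsort1 : ∀ i j, i < j → precP s (p - 1) (Xprev i) (Xprev j))
    (hbij2 : Function.Bijective Xcur)
    (hsort2 : ∀ i j, i < j → precP s p (Xcur i) (Xcur j))
    (b e : Fin ((k + 1) * m)) (hseg : isSeg s (p - 1) Xprev b e b) :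
    ∀ i, b ≤ i → i ≤ e →
      ∃ i' : Fin ((k + 1) * m),
        (i' : ℕ) + 1 = (b : ℕ) +
          (((Finset.Icc b e).filter
              (fun j => symAt s (Xprev j) (p - 1) < symAt s (Xprev i) (p - 1))).card +
            ((Finset.Icc b i).filter
              (fun j => symAt s (Xprev j) (p - 1) = symAt s (Xprev i) (p - 1))).card) ∧
        Xcur i' = Xprev i := by
  intro i hbi hie
  obtain ⟨q, rfl⟩ : ∃ q, p = q + 1 := ⟨p - 1, by omega⟩
  simp only [Nat.add_sub_cancel] at hsort1 hseg ⊢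
  obtain ⟨i', hi'⟩ := hbij2.2 (Xprev i)
  refine ⟨i', ?_, hi'⟩
  rw [← card_filter_rel_of_sorted hbij2 hsort2 i', hi',
    ← card_stableSortLT_add_one (fun j => symAt s (Xprev j) q) hbi hie]
  congr 1
  refine (card_equiv (Equiv.ofBijective Xprev hbij1) fun j => ?_).symm
  simp [precP_succ_iff_stableSortLT s hsort1 (hseg.of_le_of_le s hbi hie)]
end

section
/- Let LCP be the longest-common-prefix array of the sorted suffixes of a collection S, and for each position i > 1 let 'i is a start of a p-segment' mean that the (p-segment of i in X^p) begins at i. Then LCP[i] = p iff i is the start of a (p+1)-segment of X^{p+1} but not the start of a p-segment of X^p; moreover such p is unique. -/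
open scoped Classical

variable {A : Type*} [LinearOrder A] {m k : ℕ}

/-!
The distinct sentinels make any two distinct suffixes differ at the position
`min` of their lengths, so the full order compares suffixes at their first difference, and
the `p`-prefixes are monotone along both `x` and `X p`. Two sortings of the same elements
by a monotone key list the keys identically, so the `p`-segments of `X p` are the runs of
equal `p`-prefixes along `x`, and `i` starts a `p`-segment iff the `p`-prefixes at `i - 1`
and `i` differ. Hence `i` starts a `(p+1)`-segment but not a `p`-segment exactly when the
suffixes at `i - 1` and `i` first differ at position `p`.
-/

theorem existsUnique_eqOn_lt_and_ne {B : Type*} {a b : ℕ → B} (h : ∃ t, a t ≠ b t) :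
    ∃! p, (∀ t < p, a t = b t) ∧ a p ≠ b p := by
  classical
  refine ⟨Nat.find h, ⟨fun t ht => not_not.1 (Nat.find_min h ht), Nat.find_spec h⟩, ?_⟩
  rintro q ⟨hagree, hne⟩
  rcases lt_trichotomy q (Nat.find h) with hq | hq | hq
  · exact absurd hne (Nat.find_min h hq)
  · exact hq
  · exact absurd (hagree _ hq) (Nat.find_spec h)

theorem List.ofFn_lt_ofFn_of_eqOn_of_lt {B : Type*} [LT B] {n n' d : ℕ} {f g : ℕ → B}
    (hn : d < n) (hn' : d < n') (hagree : ∀ t < d, f t = g t) (hlt : f d < g d) :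
    (List.ofFn fun t : Fin n => f t) < List.ofFn fun t : Fin n' => g t :=
  List.lt_iff_exists.2 <| .inr
    ⟨d, by simpa, by simpa, fun j hj => by simpa using hagree j hj, by simpa using hlt⟩

theorem Function.Bijective.comp_eq_of_monotone {n : ℕ} {β γ : Type*} [PartialOrder γ]
    {X Y : Fin n → β} (hX : X.Bijective) (hY : Y.Bijective) (f : β → γ)
    (hfX : Monotone (f ∘ X)) (hfY : Monotone (f ∘ Y)) : f ∘ X = f ∘ Y := by
  have := Tuple.unique_monotone (f := f ∘ X) (σ := 1)
    (τ := (Equiv.ofBijective Y hY).trans (Equiv.ofBijective X hX).symm) hfX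
    (by simpa [Function.comp_def, Equiv.ofBijective_apply_symm_apply] using hfY)
  funext i
  simpa [Equiv.ofBijective_apply_symm_apply] using congrFun this i

theorem Monotone.forall_lt_ne_iff {ι γ : Type*} [Preorder ι] [PartialOrder γ] {g : ι → γ}
    (hg : Monotone g) {i' i : ι} (hi' : i' < i) (hle : ∀ j < i, j ≤ i') :
    (∀ j < i, g j ≠ g i) ↔ g i' ≠ g i :=
  ⟨fun h => h i' hi',
    fun h j hj heq => h (le_antisymm (hg hi'.le) (heq ▸ hg (hle j hj)))⟩

section Suffixes

variable (s : Fin m → Fin k → A)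

omit [LinearOrder A] in
theorem symAt_min_ne {α β : Fin m × Fin (k+1)} (h : α ≠ β) :
    symAt s α (min α.2 β.2) ≠ symAt s β (min α.2 β.2) := by
  intro heq
  unfold symAt at heq
  split_ifs at heq
  all_goals first | omega | simp at heq
  exact h (Prod.ext (Fin.ext heq.2) (Fin.ext heq.1))

omit [LinearOrder A] in
theorem pprefix_eq_iff (p : ℕ) (α β : Fin m × Fin (k+1)) :
    pprefix s p α = pprefix s p β ↔ ∀ t < p, symAt s α t = symAt s β t := by
  simp [pprefix, List.ofFn_inj, funext_iff, Fin.forall_iff]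

omit [LinearOrder A] in
theorem pprefix_succ_eq_iff (p : ℕ) (α β : Fin m × Fin (k+1)) :
    pprefix s (p + 1) α = pprefix s (p + 1) β ↔
      pprefix s p α = pprefix s p β ∧ symAt s α p = symAt s β p := by
  simp only [pprefix_eq_iff, Nat.lt_succ_iff_lt_or_eq, or_imp, forall_and, forall_eq]

theorem exists_symAt_lt_of_fullOrd {α β : Fin m × Fin (k+1)} (h : fullOrd s α β)
    (hne : α ≠ β) :
    ∃ d, (∀ t < d, symAt s α t = symAt s β t) ∧ symAt s α d < symAt s β d := by
  obtain ⟨d, ⟨hagree, hd⟩, -⟩ := existsUnique_eqOn_lt_and_ne ⟨_, symAt_min_ne s hne⟩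
  have hd_le : d ≤ min (α.2 : ℕ) β.2 :=
    not_lt.1 fun hlt => symAt_min_ne s hne (hagree _ hlt)
  refine ⟨d, hagree, (lt_or_gt_of_ne hd).resolve_right fun hgt => ?_⟩
  have hβα : suffStr s β < suffStr s α :=
    List.ofFn_lt_ofFn_of_eqOn_of_lt (by omega) (by omega) (fun t ht => (hagree t ht).symm) hgt
  rcases h with hαβ | ⟨heq, -⟩
  · exact lt_asymm hαβ hβα
  · exact hβα.ne heq.symm

theorem pprefix_le_of_fullOrd (p : ℕ) {α β : Fin m × Fin (k+1)} (h : fullOrd s α β) :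
    pprefix s p α ≤ pprefix s p β := by
  obtain rfl | hne := eq_or_ne α β
  · exact le_rfl
  obtain ⟨d, hagree, hlt⟩ := exists_symAt_lt_of_fullOrd s h hne
  by_cases hd : d < p
  · exact (List.ofFn_lt_ofFn_of_eqOn_of_lt hd hd hagree hlt).le
  · exact ((pprefix_eq_iff s p α β).2 fun t ht => hagree t (by omega)).le

theorem pprefix_le_of_precP {p : ℕ} {α β : Fin m × Fin (k+1)} (h : precP s p α β) :
    pprefix s p α ≤ pprefix s p β :=
  h.elim (fun hlt => le_of_lt hlt) fun h => h.1.le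

theorem isStart_iff_pprefix_ne {p n : ℕ} {X : Fin n → Fin m × Fin (k+1)}
    (hX : Monotone (pprefix s p ∘ X)) {i' i : Fin n} (hi' : i' < i) (hle : ∀ j < i, j ≤ i') :
    isStart s p X i ↔ pprefix s p (X i') ≠ pprefix s p (X i) :=
  hX.forall_lt_ne_iff hi' hle

theorem eqOn_lt_and_ne_iff (p : ℕ) (α β : Fin m × Fin (k+1)) :
    ((∀ t < p, symAt s α t = symAt s β t) ∧ symAt s α p ≠ symAt s β p) ↔
      pprefix s (p + 1) α ≠ pprefix s (p + 1) β ∧ ¬ pprefix s p α ≠ pprefix s p β := by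
  simp only [ne_eq, pprefix_succ_eq_iff, pprefix_eq_iff]
  tauto

end Suffixes

/-- Let `x` be the fully sorted suffix array and, for each `p`, let
`X p` be the array of suffixes sorted by `≺_p`.  For a position `i > 0`, the LCP value at
`i` — the length of the longest common prefix of the suffixes at positions `i-1` and `i`
of `x` — equals `p` iff `i` is the start of a `(p+1)`-segment of `X (p+1)` but not the
start of a `p`-segment of `X p`; moreover such a `p` is unique. -/
theorem lcp_via_segments (s : Fin m → Fin k → A)
    (X : ℕ → Fin ((k + 1) * m) → Fin m × Fin (k + 1))
    (hbij : ∀ p, Function.Bijective (X p))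
    (hsort : ∀ p i j, i < j → precP s p (X p i) (X p j))
    (x : Fin ((k + 1) * m) → Fin m × Fin (k + 1))
    (hxbij : Function.Bijective x)
    (hxsort : ∀ i j, i < j → fullOrd s (x i) (x j)) :
    ∀ i : Fin ((k + 1) * m), 0 < (i : ℕ) →
      (∀ p : ℕ,
        ((∀ t, t < p →
            symAt s (x ⟨(i : ℕ) - 1, Nat.lt_of_le_of_lt (Nat.sub_le _ _) i.isLt⟩) t =
              symAt s (x i) t) ∧
          symAt s (x ⟨(i : ℕ) - 1, Nat.lt_of_le_of_lt (Nat.sub_le _ _) i.isLt⟩) p ≠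
            symAt s (x i) p)
        ↔ (isStart s (p + 1) (X (p + 1)) i ∧ ¬ isStart s p (X p) i)) ∧
      (∃! p : ℕ, isStart s (p + 1) (X (p + 1)) i ∧ ¬ isStart s p (X p) i) := by
  intro i hi
  set i' : Fin ((k + 1) * m) := ⟨(i : ℕ) - 1, Nat.lt_of_le_of_lt (Nat.sub_le _ _) i.isLt⟩
  have hi' : i' < i := Fin.lt_def.2 (by simp only [i']; omega)
  have hle : ∀ j < i, j ≤ i' := fun j hj => Fin.le_def.2 (by simp only [i']; omega)
  have hx_mono : ∀ p, Monotone (pprefix s p ∘ x) := fun p =>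
    monotone_iff_forall_lt.2 fun a b hab => pprefix_le_of_fullOrd s p (hxsort a b hab)
  have hX_mono : ∀ p, Monotone (pprefix s p ∘ X p) := fun p =>
    monotone_iff_forall_lt.2 fun a b hab => pprefix_le_of_precP s (hsort p a b hab)
  have hstart : ∀ p, isStart s p (X p) i ↔ pprefix s p (x i') ≠ pprefix s p (x i) := by
    intro p
    have halign : ∀ j, pprefix s p (X p j) = pprefix s p (x j) :=
      congrFun ((hbij p).comp_eq_of_monotone hxbij _ (hX_mono p) (hx_mono p))
    rw [isStart_iff_pprefix_ne s (hX_mono p) hi' hle, halign, halign]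
  have hiff : ∀ p, ((∀ t < p, symAt s (x i') t = symAt s (x i) t) ∧
      symAt s (x i') p ≠ symAt s (x i) p) ↔
        (isStart s (p + 1) (X (p + 1)) i ∧ ¬ isStart s p (X p) i) := fun p => by
    rw [hstart, hstart]
    exact eqOn_lt_and_ne_iff s p (x i') (x i)
  have hne : x i' ≠ x i := hxbij.injective.ne hi'.ne
  exact ⟨hiff, (existsUnique_congr hiff).1
    (existsUnique_eqOn_lt_and_ne ⟨_, symAt_min_ne s hne⟩)⟩
end
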